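/- arXiv:1712.01226 — 7 statements merged into one kernel-verified Lean document; each statement's English description precedes it below -/
import Mathlib

section
/- For every probability measure μ on [0,∞), the induced output density f_μ(R) = ∫₀^∞ K(R,r) dμ(r) is a continuous function of R on [0,∞), and it satisfies 0 < f_μ(R) < 1 for every R > 0. -/
/-!
Write `K(R,r) = (R/π) ∫₀^π exp(-|R - r e^{iθ}|²/2) dθ`. For `r ≥ 0` the squared distance
`|R - r e^{iθ}|²` is at least `R² sin² θ ≥ (2Rθ/π)²` when `θ ≤ π/2`, and at least `R²` when
`θ ≥ π/2`. A Gaussian integral bounds the first half by `√(π/2)/2`, the second by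
`R e^{-R²/2}/2 ≤ 1/(2√2)`, so `K ≤ (√(π/2) + 1/√2)/2 < 1` uniformly; as `I₀` is even, this holds
for all `r`. Continuity then follows by dominated convergence, and positivity from `K > 0`.
-/

open MeasureTheory Real Set

/-- Modified Bessel function of the first kind of order zero. -/
noncomputable def I0 (x : ℝ) : ℝ :=
  (1 / π) * ∫ θ in (0:ℝ)..π, Real.exp (x * Real.cos θ)

/-- The kernel `K(R,r) = R e^{-(R²+r²)/2} I₀(rR)`. -/
noncomputable def Ker (R r : ℝ) : ℝ :=
  R * Real.exp (-(R ^ 2 + r ^ 2) / 2) * I0 (r * R)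

/-- Output density induced by an input (amplitude) distribution `μ`. -/
noncomputable def fout (μ : Measure ℝ) (R : ℝ) : ℝ := ∫ r, Ker R r ∂μ

/-- Output entropy `H(μ) = -∫₀^∞ f_μ(R) ln (f_μ(R)/R) dR`. -/
noncomputable def Hout (μ : Measure ℝ) : ℝ :=
  -∫ R in Ioi (0:ℝ), fout μ R * Real.log (fout μ R / R)

lemma continuous_I0 : Continuous I0 :=
  continuous_const.mul <|
    intervalIntegral.continuous_parametric_intervalIntegral_of_continuous' (by fun_prop) 0 π

lemma I0_pos (x : ℝ) : 0 < I0 x := by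
  have : 0 < ∫ θ in (0:ℝ)..π, exp (x * cos θ) :=
    intervalIntegral.intervalIntegral_pos_of_pos
      (Continuous.intervalIntegrable (by fun_prop) _ _) (fun θ => exp_pos _) pi_pos
  unfold I0
  positivity

lemma I0_neg (x : ℝ) : I0 (-x) = I0 x := by
  unfold I0
  have h := intervalIntegral.integral_comp_sub_left (fun θ => exp (x * cos θ)) π (a := 0) (b := π)
  rw [sub_self, sub_zero] at h
  rw [← h]
  simp [cos_pi_sub]

lemma continuous_Ker : Continuous (Function.uncurry Ker) := by
  have := continuous_I0
  unfold Function.uncurry Ker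
  fun_prop

lemma Ker_pos {R : ℝ} (hR : 0 < R) (r : ℝ) : 0 < Ker R r := by
  have := I0_pos (r * R)
  unfold Ker
  positivity

lemma Ker_nonneg {R : ℝ} (hR : 0 ≤ R) (r : ℝ) : 0 ≤ Ker R r := by
  have := I0_pos (r * R)
  unfold Ker
  positivity

lemma Ker_neg_right (R r : ℝ) : Ker R (-r) = Ker R r := by
  simp only [Ker, neg_sq, neg_mul, I0_neg]

lemma Ker_eq_integral (R r : ℝ) :
    Ker R r = R / π * ∫ θ in (0:ℝ)..π, exp (r * R * cos θ - (R ^ 2 + r ^ 2) / 2) := by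
  simp only [Ker, I0, sub_eq_add_neg, exp_add, intervalIntegral.integral_mul_const]
  ring_nf

lemma integral_exp_neg_mul_sq_le {b c : ℝ} (hb : 0 < b) (hc : 0 ≤ c) :
    ∫ θ in (0:ℝ)..c, exp (-b * θ ^ 2) ≤ √(π / b) / 2 := by
  rw [← integral_gaussian_Ioi, intervalIntegral.integral_of_le hc]
  exact setIntegral_mono_set (integrable_exp_neg_mul_sq hb).integrableOn
    (.of_forall fun θ => (exp_pos _).le) Ioc_subset_Ioi_self.eventuallyLE

lemma mul_cos_sub_le_of_le_pi_div_two (R r : ℝ) {θ : ℝ} (h0 : 0 ≤ θ) (h1 : θ ≤ π / 2) :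
    r * R * cos θ - (R ^ 2 + r ^ 2) / 2 ≤ -(2 * R ^ 2 / π ^ 2) * θ ^ 2 := by
  have hsin : 2 / π * θ ≤ sin θ := mul_le_sin h0 h1
  calc r * R * cos θ - (R ^ 2 + r ^ 2) / 2
        = -(r - R * cos θ) ^ 2 / 2 - R ^ 2 * sin θ ^ 2 / 2 := by rw [sin_sq]; ring
    _ ≤ -(R ^ 2 * sin θ ^ 2) / 2 := by nlinarith [sq_nonneg (r - R * cos θ)]
    _ ≤ -(R ^ 2 * (2 / π * θ) ^ 2) / 2 := by gcongr
    _ = -(2 * R ^ 2 / π ^ 2) * θ ^ 2 := by ring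

lemma mul_cos_sub_le_of_pi_div_two_le {R r θ : ℝ} (hR : 0 ≤ R) (hr : 0 ≤ r) (h0 : π / 2 ≤ θ)
    (h1 : θ ≤ π) : r * R * cos θ - (R ^ 2 + r ^ 2) / 2 ≤ -R ^ 2 / 2 := by
  have : cos θ ≤ 0 := cos_nonpos_of_pi_div_two_le_of_le h0 (by linarith)
  nlinarith [mul_nonneg hr hR, sq_nonneg r]

lemma Ker_le_of_nonneg {R r : ℝ} (hR : 0 ≤ R) (hr : 0 ≤ r) :
    Ker R r ≤ (√(π / 2) + R * exp (-R ^ 2 / 2)) / 2 := by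
  rcases hR.eq_or_lt with rfl | hR
  · simp only [Ker, zero_mul]
    positivity
  set g := fun θ => exp (r * R * cos θ - (R ^ 2 + r ^ 2) / 2)
  have hg : Continuous g := by fun_prop
  have hnear : ∫ θ in (0:ℝ)..π / 2, g θ ≤ π / R * √(π / 2) / 2 :=
    calc ∫ θ in (0:ℝ)..π / 2, g θ ≤ ∫ θ in (0:ℝ)..π / 2, exp (-(2 * R ^ 2 / π ^ 2) * θ ^ 2) :=
          intervalIntegral.integral_mono_on (by positivity) (hg.intervalIntegrable _ _)
            (Continuous.intervalIntegrable (by fun_prop) _ _)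
            fun θ hθ => exp_le_exp.2 (mul_cos_sub_le_of_le_pi_div_two R r hθ.1 hθ.2)
      _ ≤ √(π / (2 * R ^ 2 / π ^ 2)) / 2 :=
          integral_exp_neg_mul_sq_le (by positivity) (by positivity)
      _ = π / R * √(π / 2) / 2 := by
        rw [show π / (2 * R ^ 2 / π ^ 2) = (π / R) ^ 2 * (π / 2) by field_simp,
          sqrt_mul (by positivity), sqrt_sq (by positivity)]
  have hfar : ∫ θ in π / 2..π, g θ ≤ π / 2 * exp (-R ^ 2 / 2) :=
    calc ∫ θ in π / 2..π, g θ ≤ ∫ θ in π / 2..π, exp (-R ^ 2 / 2) :=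
          intervalIntegral.integral_mono_on (by linarith [pi_pos]) (hg.intervalIntegrable _ _)
            intervalIntegrable_const
            fun θ hθ => exp_le_exp.2 (mul_cos_sub_le_of_pi_div_two_le hR.le hr hθ.1 hθ.2)
      _ = π / 2 * exp (-R ^ 2 / 2) := by
        rw [intervalIntegral.integral_const, smul_eq_mul]
        ring
  rw [Ker_eq_integral, ← intervalIntegral.integral_add_adjacent_intervals (b := π / 2)
    (hg.intervalIntegrable _ _) (hg.intervalIntegrable _ _)]
  calc R / π * ((∫ θ in (0:ℝ)..π / 2, g θ) + ∫ θ in π / 2..π, g θ)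
      ≤ R / π * (π / R * √(π / 2) / 2 + π / 2 * exp (-R ^ 2 / 2)) := by gcongr
    _ = (√(π / 2) + R * exp (-R ^ 2 / 2)) / 2 := by field_simp

lemma mul_exp_neg_sq_div_two_le (x : ℝ) : x * exp (-x ^ 2 / 2) ≤ 1 / √2 := by
  have h2 : √2 ^ 2 = 2 := sq_sqrt zero_le_two
  have hx : √2 * x ≤ exp (x ^ 2 / 2) := by
    nlinarith [add_one_le_exp (x ^ 2 / 2), sq_nonneg (x - √2)]
  rw [neg_div, exp_neg, ← div_eq_mul_inv, div_le_div_iff₀ (exp_pos _) (by positivity)]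
  linarith

lemma Ker_le {R : ℝ} (hR : 0 ≤ R) (r : ℝ) : Ker R r ≤ (√(π / 2) + 1 / √2) / 2 := by
  wlog hr : 0 ≤ r generalizing r
  · simpa only [Ker_neg_right] using this (-r) (by linarith)
  linarith [Ker_le_of_nonneg hR hr, mul_exp_neg_sq_div_two_le R]

lemma sqrt_pi_div_two_add_one_div_sqrt_two_lt_two : √(π / 2) + 1 / √2 < 2 := by
  have hpi : √(π / 2) < 63 / 50 := by
    rw [sqrt_lt' (by norm_num)]
    linarith [pi_lt_d2]
  have h2 : 7 / 5 < √2 := by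
    rw [lt_sqrt (by norm_num)]
    norm_num
  have : 1 / √2 < 5 / 7 := by
    rw [div_lt_div_iff₀ (by positivity) (by norm_num)]
    linarith
  linarith

lemma norm_Ker_le {R : ℝ} (hR : 0 ≤ R) (r : ℝ) : ‖Ker R r‖ ≤ (√(π / 2) + 1 / √2) / 2 := by
  rw [Real.norm_of_nonneg (Ker_nonneg hR r)]
  exact Ker_le hR r

lemma integral_pos_of_forall_pos {α : Type*} [MeasurableSpace α] {μ : Measure α} [NeZero μ]
    {f : α → ℝ} (hf : ∀ x, 0 < f x) (hfi : Integrable f μ) : 0 < ∫ x, f x ∂μ := by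
  rw [integral_pos_iff_support_of_nonneg (fun x => (hf x).le) hfi,
    Function.support_eq_univ fun x => (hf x).ne']
  exact Measure.measure_univ_pos.2 (NeZero.ne μ)

section fout

variable (μ : Measure ℝ)

lemma integrable_Ker [IsFiniteMeasure μ] {R : ℝ} (hR : 0 ≤ R) : Integrable (Ker R) μ :=
  .of_bound (continuous_Ker.comp (Continuous.prodMk_right R)).aestronglyMeasurable _
    (.of_forall (norm_Ker_le hR))

lemma continuousOn_fout [IsFiniteMeasure μ] : ContinuousOn (fout μ) (Ici 0) :=
  continuousOn_of_dominated
    (fun _ _ => (continuous_Ker.comp (Continuous.prodMk_right _)).aestronglyMeasurable)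
    (fun _ hR => .of_forall (norm_Ker_le hR)) (integrable_const _)
    (.of_forall fun _ => (continuous_Ker.comp (Continuous.prodMk_left _)).continuousOn)

lemma fout_pos [IsFiniteMeasure μ] [NeZero μ] {R : ℝ} (hR : 0 < R) : 0 < fout μ R :=
  integral_pos_of_forall_pos (Ker_pos hR) (integrable_Ker μ hR.le)

lemma fout_le [IsProbabilityMeasure μ] {R : ℝ} (hR : 0 ≤ R) :
    fout μ R ≤ (√(π / 2) + 1 / √2) / 2 := by
  have := norm_integral_le_of_norm_le_const (μ := μ) (.of_forall (norm_Ker_le hR))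
  rw [probReal_univ, mul_one] at this
  exact (le_abs_self _).trans this

end fout

theorem stmt_4_general (μ : Measure ℝ) (hμ : IsProbabilityMeasure μ) :
    ContinuousOn (fout μ) (Ici 0) ∧
    ∀ R : ℝ, 0 < R → 0 < fout μ R ∧ fout μ R < 1 :=
  ⟨continuousOn_fout μ, fun _ hR => ⟨fout_pos μ hR,
    by linarith [fout_le μ hR.le, sqrt_pi_div_two_add_one_div_sqrt_two_lt_two]⟩⟩

theorem stmt_4 (μ : Measure ℝ) (hμ : IsProbabilityMeasure μ) (hsupp : μ (Iio 0) = 0) :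
    ContinuousOn (fout μ) (Ici 0) ∧
    ∀ R : ℝ, 0 < R → 0 < fout μ R ∧ fout μ R < 1 :=
  stmt_4_general μ hμ
end

section
/- For every x > 0 and every a ∈ (0,1), I₀(x) < e^x·( â·(1 − e^{-2ax})/(π·x) + erf(√(2ax))/√(2πx) + e^{-2ax} ), where â = (1/√(1−a) − 1)/(2√a). -/
open MeasureTheory Real Set

/-- The error function `erf(x) = (2/√π) ∫₀^x e^{-t²} dt`. -/
noncomputable def erf (x : ℝ) : ℝ :=
  (2 / Real.sqrt π) * ∫ t in (0:ℝ)..x, Real.exp (-t ^ 2)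

/-!
Substituting `θ = 2u` gives `I₀(x) = eˣ (2/π) ∫₀^{π/2} e^{-2x sin² u} du`; split this integral at
`u₀ = arcsin √a`. On `[0, u₀]` the substitution `t = sin u` produces the weight `1/√(1 - t²)`,
which is convex and hence lies below its chord `1 + 2â t` over `[0, √a]`; integrating
`(1 + 2â t) e^{-2x t²}` gives the `erf` term and the `â` term. On `[u₀, π/2]` the integrand is at
most `e^{-2ax}`, and the interval is shorter than `π/2` because `u₀ > 0`.
-/

lemma I0_eq_exp_mul_integral_sin_sq (x : ℝ) :
    I0 x = Real.exp x * (2 / π * ∫ u in (0:ℝ)..π / 2, Real.exp (-(2 * x) * Real.sin u ^ 2)) := by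
  have hcos (u : ℝ) :
      Real.exp (x * Real.cos (2 * u)) = Real.exp x * Real.exp (-(2 * x) * Real.sin u ^ 2) := by
    rw [← Real.exp_add, Real.cos_two_mul, Real.cos_sq']
    ring_nf
  have hhalf : ∫ u in (0:ℝ)..π / 2, Real.exp (x * Real.cos (2 * u))
      = 2⁻¹ * ∫ θ in (0:ℝ)..π, Real.exp (x * Real.cos θ) := by
    rw [intervalIntegral.integral_comp_mul_left (fun θ => Real.exp (x * Real.cos θ)) two_ne_zero,
      mul_zero, mul_div_cancel₀ π two_ne_zero, smul_eq_mul]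
  simp only [hcos, intervalIntegral.integral_const_mul] at hhalf
  rw [I0, mul_left_comm, hhalf]
  ring

lemma integral_exp_neg_mul_sq_eq_erf {c : ℝ} (hc : 0 < c) (b : ℝ) :
    ∫ t in (0:ℝ)..b, Real.exp (-c * t ^ 2) = √π / (2 * √c) * erf (√c * b) := by
  have hsq (t : ℝ) : -c * t ^ 2 = -(√c * t) ^ 2 := by
    rw [mul_pow, Real.sq_sqrt hc.le, neg_mul]
  have hpi : √π ≠ 0 := (Real.sqrt_pos.2 Real.pi_pos).ne'
  simp only [hsq]
  rw [intervalIntegral.integral_comp_mul_left (fun s => Real.exp (-s ^ 2))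
    (Real.sqrt_pos.2 hc).ne', mul_zero, smul_eq_mul, erf]
  field_simp

lemma integral_mul_exp_neg_mul_sq {c : ℝ} (hc : c ≠ 0) (b : ℝ) :
    ∫ t in (0:ℝ)..b, t * Real.exp (-c * t ^ 2) = (1 - Real.exp (-c * b ^ 2)) / (2 * c) := by
  have hderiv (t : ℝ) :
      HasDerivAt (fun t => Real.exp (-c * t ^ 2) / -(2 * c)) (t * Real.exp (-c * t ^ 2)) t := by
    refine (((hasDerivAt_pow 2 t).const_mul (-c)).exp.div_const (-(2 * c))).congr_deriv ?_
    field_simp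
    ring
  rw [intervalIntegral.integral_eq_sub_of_hasDerivAt (fun t _ => hderiv t)
    (by apply Continuous.intervalIntegrable; fun_prop)]
  ring_nf
  rw [Real.exp_zero]
  ring

lemma one_le_sqrt_one_sub_sq_mul_chord {b t : ℝ} (hb0 : 0 < b) (hb1 : b < 1)
    (ht0 : 0 ≤ t) (htb : t ≤ b) :
    1 ≤ √(1 - t ^ 2) * (1 + (1 / √(1 - b ^ 2) - 1) / b * t) := by
  set s := √(1 - t ^ 2)
  set β := √(1 - b ^ 2)
  set c := (1 / β - 1) / b
  have hs2 : s ^ 2 = 1 - t ^ 2 := Real.sq_sqrt (by nlinarith)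
  have hβ2 : β ^ 2 = 1 - b ^ 2 := Real.sq_sqrt (by nlinarith)
  have hs0 : 0 ≤ s := Real.sqrt_nonneg _
  have hβ0 : 0 < β := Real.sqrt_pos.2 (by nlinarith)
  have hβ1 : β ≤ 1 := by nlinarith
  have hβs : β ≤ s := Real.sqrt_le_sqrt (by nlinarith)
  have hc0 : 0 ≤ c := div_nonneg (by rw [sub_nonneg, le_div_iff₀ hβ0]; linarith) hb0.le
  have hcβ : c * (β * (1 + β)) = b := by
    simp only [c]
    field_simp
    nlinarith
  -- `1 - s = t² / (1 + s)`, so it suffices that `t ≤ c s (1 + s)`, and `c β (1 + β) = b ≥ t`.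
  have ht : t ≤ c * (s * (1 + s)) := by
    nlinarith [mul_nonneg (mul_nonneg hc0 (sub_nonneg.2 hβs)) (by linarith : 0 ≤ 1 + s + β)]
  nlinarith [mul_le_mul_of_nonneg_right ht ht0]

lemma integral_arcsin_to_pi_div_two_exp_neg_mul_sin_sq_le {x b : ℝ} (hx : 0 ≤ x) (hb0 : 0 ≤ b)
    (hb1 : b ≤ 1) :
    ∫ u in Real.arcsin b..π / 2, Real.exp (-(2 * x) * Real.sin u ^ 2)
      ≤ (π / 2 - Real.arcsin b) * Real.exp (-(2 * x) * b ^ 2) := by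
  have hb : b ∈ Icc (-1 : ℝ) 1 := ⟨by linarith, hb1⟩
  have hconst : ∫ _ in Real.arcsin b..π / 2, Real.exp (-(2 * x) * b ^ 2)
      = (π / 2 - Real.arcsin b) * Real.exp (-(2 * x) * b ^ 2) := by
    rw [intervalIntegral.integral_const, smul_eq_mul]
  rw [← hconst]
  refine intervalIntegral.integral_mono_on (Real.arcsin_le_pi_div_two b)
    (by apply Continuous.intervalIntegrable; fun_prop) intervalIntegrable_const fun u hu => ?_
  have hu' : u ∈ Icc (-(π / 2)) (π / 2) :=
    ⟨by linarith [Real.arcsin_nonneg.2 hb0, Real.pi_pos, hu.1], hu.2⟩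
  have hbu : b ≤ Real.sin u := (Real.arcsin_le_iff_le_sin hb hu').1 hu.1
  exact Real.exp_le_exp.2 (mul_le_mul_of_nonpos_left (pow_le_pow_left₀ hb0 hbu 2) (by linarith))

lemma integral_zero_to_arcsin_exp_neg_mul_sin_sq_le {x b : ℝ} (hx : 0 < x) (hb0 : 0 < b)
    (hb1 : b < 1) :
    ∫ u in (0:ℝ)..Real.arcsin b, Real.exp (-(2 * x) * Real.sin u ^ 2)
      ≤ √π / (2 * √(2 * x)) * erf (√(2 * x) * b)
        + (1 / √(1 - b ^ 2) - 1) / b * ((1 - Real.exp (-(2 * x) * b ^ 2)) / (2 * (2 * x))) := by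
  set c := (1 / √(1 - b ^ 2) - 1) / b
  set g : ℝ → ℝ := fun t => (1 + c * t) * Real.exp (-(2 * x) * t ^ 2)
  have hb : b ∈ Icc (-1 : ℝ) 1 := ⟨by linarith, hb1.le⟩
  have hx2 : 0 < 2 * x := by positivity
  calc ∫ u in (0:ℝ)..Real.arcsin b, Real.exp (-(2 * x) * Real.sin u ^ 2)
      ≤ ∫ u in (0:ℝ)..Real.arcsin b, (g ∘ Real.sin) u * Real.cos u := by
        refine intervalIntegral.integral_mono_on (Real.arcsin_nonneg.2 hb0.le)
          (by apply Continuous.intervalIntegrable; fun_prop)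
          (by apply Continuous.intervalIntegrable; fun_prop) fun u hu => ?_
        have hu' : u ∈ Icc (-(π / 2)) (π / 2) :=
          ⟨by linarith [hu.1, Real.pi_pos], hu.2.trans (Real.arcsin_le_pi_div_two b)⟩
        have hchord := one_le_sqrt_one_sub_sq_mul_chord hb0 hb1
          (Real.sin_nonneg_of_nonneg_of_le_pi hu.1 (by linarith [hu'.2, Real.pi_pos]))
          ((Real.le_arcsin_iff_sin_le hu' hb).1 hu.2)
        rw [← Real.cos_eq_sqrt_one_sub_sin_sq hu'.1 hu'.2] at hchord
        have hweighted :=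
          mul_le_mul_of_nonneg_left hchord (Real.exp_pos (-(2 * x) * Real.sin u ^ 2)).le
        simp only [g, Function.comp]
        linarith
    _ = ∫ t in (0:ℝ)..b, g t := by
        rw [intervalIntegral.integral_comp_mul_deriv (fun u _ => Real.hasDerivAt_sin u)
          Real.continuous_cos.continuousOn (by fun_prop), Real.sin_zero,
          Real.sin_arcsin hb.1 hb.2]
    _ = (∫ t in (0:ℝ)..b, Real.exp (-(2 * x) * t ^ 2))
          + c * ∫ t in (0:ℝ)..b, t * Real.exp (-(2 * x) * t ^ 2) := by
        rw [← intervalIntegral.integral_const_mul, ← intervalIntegral.integral_add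
          (by apply Continuous.intervalIntegrable; fun_prop)
          (by apply Continuous.intervalIntegrable; fun_prop)]
        congr 1 with t
        ring
    _ = _ := by
        rw [integral_exp_neg_mul_sq_eq_erf hx2, integral_mul_exp_neg_mul_sq hx2.ne']

lemma integral_exp_neg_mul_sin_sq_lt {x b : ℝ} (hx : 0 < x) (hb0 : 0 < b) (hb1 : b < 1) :
    ∫ u in (0:ℝ)..π / 2, Real.exp (-(2 * x) * Real.sin u ^ 2)
      < √π / (2 * √(2 * x)) * erf (√(2 * x) * b)
        + (1 / √(1 - b ^ 2) - 1) / b * ((1 - Real.exp (-(2 * x) * b ^ 2)) / (2 * (2 * x)))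
        + π / 2 * Real.exp (-(2 * x) * b ^ 2) := by
  have hint (α β : ℝ) :
      IntervalIntegrable (fun u => Real.exp (-(2 * x) * Real.sin u ^ 2)) volume α β := by
    apply Continuous.intervalIntegrable; fun_prop
  rw [← intervalIntegral.integral_add_adjacent_intervals (hint 0 (Real.arcsin b)) (hint _ _)]
  have hhead := integral_zero_to_arcsin_exp_neg_mul_sin_sq_le hx hb0 hb1
  have htail := integral_arcsin_to_pi_div_two_exp_neg_mul_sin_sq_le hx.le hb0.le hb1.le
  have hgap := mul_pos (Real.arcsin_pos.2 hb0) (Real.exp_pos (-(2 * x) * b ^ 2))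
  linarith

theorem stmt_10 (x a : ℝ) (hx : 0 < x) (ha : 0 < a) (ha1 : a < 1) :
    I0 x < Real.exp x *
      (((1 / Real.sqrt (1 - a) - 1) / (2 * Real.sqrt a)) * (1 - Real.exp (-2 * a * x)) / (π * x)
        + erf (Real.sqrt (2 * a * x)) / Real.sqrt (2 * π * x)
        + Real.exp (-2 * a * x)) := by
  set b := √a
  have hb0 : 0 < b := Real.sqrt_pos.2 ha
  have hb2 : b ^ 2 = a := Real.sq_sqrt ha.le
  have hb1 : b < 1 := by nlinarith
  have hexp : Real.exp (-2 * a * x) = Real.exp (-(2 * x) * b ^ 2) := by rw [hb2]; ring_nf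
  have herf : √(2 * a * x) = √(2 * x) * b := by
    rw [← Real.sqrt_mul (by positivity)]; ring_nf
  have hnorm : √(2 * π * x) = √π * √(2 * x) := by
    rw [← Real.sqrt_mul Real.pi_pos.le]; ring_nf
  rw [I0_eq_exp_mul_integral_sin_sq, hexp, herf, hnorm, ← hb2]
  refine mul_lt_mul_of_pos_left ?_ (Real.exp_pos x)
  calc _ < 2 / π * _ :=
        mul_lt_mul_of_pos_left (integral_exp_neg_mul_sin_sq_lt hx hb0 hb1) (by positivity)
    _ = _ := by
        have hsqrt : 0 < √(2 * x) := Real.sqrt_pos.2 (by positivity)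
        field_simp
        linear_combination 2 * x * b * erf (√(2 * x) * b) * Real.sq_sqrt Real.pi_pos.le
end

section
/- For every x > 0, the modified Bessel function of the first kind of order zero satisfies both I₀(x) < e^x/√(πx) + 1 and I₀(x) < e^x/√x. -/
open MeasureTheory Real Set

/-!
On `[0, π/2]` we have `cos θ ≤ 1 - θ²/3`, so that part of the integral defining `π I₀(x)` is at
most `eˣ` times a half Gaussian integral, `eˣ √(3π/x) / 2`; on `[π/2, π]` the integrand is at
most `1`. Hence `I₀(x) ≤ (√3/2) eˣ/√(πx) + 1/2`, and both inequalities follow from `√3 < 2`,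
`3 < π` and `√x ≤ eˣ`.
-/

theorem cos_le_one_sub_sq_div_three {θ : ℝ} (h₀ : 0 ≤ θ) (h₂ : θ ≤ 2) :
    cos θ ≤ 1 - θ ^ 2 / 3 := by
  -- `sin u ≥ u - u³/6 ≥ 5u/6` for `u = θ/2 ≤ 1`
  have hsin : 5 / 12 * θ ≤ sin (θ / 2) := by
    nlinarith [sin_ge_sub_cube (by positivity : 0 ≤ θ / 2),
      mul_nonneg (mul_nonneg h₀ (sub_nonneg.2 h₂)) (by positivity : 0 ≤ θ + 2)]
  have hcos : cos θ = 1 - 2 * sin (θ / 2) ^ 2 := by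
    rw [← cos_two_mul_eq_one_sub, mul_div_cancel₀ _ two_ne_zero]
  nlinarith

theorem intervalIntegral_gaussian_le {b : ℝ} (hb : 0 < b) {a : ℝ} (ha : 0 ≤ a) :
    ∫ θ in (0:ℝ)..a, exp (-b * θ ^ 2) ≤ √(π / b) / 2 := by
  rw [← integral_gaussian_Ioi, intervalIntegral.integral_of_le ha]
  exact setIntegral_mono_set (integrable_exp_neg_mul_sq hb).integrableOn
    (.of_forall fun _ => (exp_pos _).le) Ioc_subset_Ioi_self.eventuallyLE

theorem intervalIntegrable_exp_mul_cos (x a b : ℝ) :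
    IntervalIntegrable (fun θ => exp (x * cos θ)) volume a b := by
  apply Continuous.intervalIntegrable
  fun_prop

theorem integral_exp_mul_cos_zero_pi_div_two_le {x : ℝ} (hx : 0 < x) :
    ∫ θ in (0:ℝ)..(π / 2), exp (x * cos θ) ≤ exp x * (√(π / (x / 3)) / 2) := by
  calc ∫ θ in (0:ℝ)..(π / 2), exp (x * cos θ)
      ≤ ∫ θ in (0:ℝ)..(π / 2), exp x * exp (-(x / 3) * θ ^ 2) := by
        refine intervalIntegral.integral_mono_on (by positivity)
          (intervalIntegrable_exp_mul_cos _ _ _) (Continuous.intervalIntegrable (by fun_prop) _ _)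
          fun θ hθ => ?_
        have := cos_le_one_sub_sq_div_three hθ.1 (hθ.2.trans (by linarith [pi_lt_four]))
        rw [← exp_add, exp_le_exp]
        nlinarith
    _ = exp x * ∫ θ in (0:ℝ)..(π / 2), exp (-(x / 3) * θ ^ 2) :=
        intervalIntegral.integral_const_mul _ _
    _ ≤ exp x * (√(π / (x / 3)) / 2) := by
        gcongr
        exact intervalIntegral_gaussian_le (by positivity) (by positivity)

theorem integral_exp_mul_cos_pi_div_two_pi_le {x : ℝ} (hx : 0 ≤ x) :
    ∫ θ in (π / 2)..π, exp (x * cos θ) ≤ π / 2 := by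
  calc ∫ θ in (π / 2)..π, exp (x * cos θ)
      ≤ ∫ _ in (π / 2)..π, (1 : ℝ) := by
        refine intervalIntegral.integral_mono_on (by linarith [pi_pos])
          (intervalIntegrable_exp_mul_cos _ _ _) intervalIntegrable_const fun θ hθ => ?_
        rw [exp_le_one_iff]
        exact mul_nonpos_of_nonneg_of_nonpos hx
          (cos_nonpos_of_pi_div_two_le_of_le hθ.1 (by linarith [hθ.2, pi_pos]))
    _ = π / 2 := by simp; ring

theorem I0_le {x : ℝ} (hx : 0 < x) :
    I0 x ≤ √3 / 2 * (exp x / √(π * x)) + 1 / 2 := by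
  rw [I0, ← intervalIntegral.integral_add_adjacent_intervals
    (intervalIntegrable_exp_mul_cos x 0 (π / 2)) (intervalIntegrable_exp_mul_cos x _ π)]
  have hsum := add_le_add (integral_exp_mul_cos_zero_pi_div_two_le hx)
    (integral_exp_mul_cos_pi_div_two_pi_le hx.le)
  calc 1 / π * ((∫ θ in (0:ℝ)..(π / 2), exp (x * cos θ)) + ∫ θ in (π / 2)..π, exp (x * cos θ))
      ≤ 1 / π * (exp x * (√(π / (x / 3)) / 2) + π / 2) := by gcongr
    _ = √3 / 2 * (exp x / √(π * x)) + 1 / 2 := by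
        rw [show π / (x / 3) = 3 * π / x by ring, sqrt_div' _ hx.le, sqrt_mul (by norm_num),
          sqrt_mul pi_pos.le]
        field_simp
        linear_combination (exp x * √3) * mul_self_sqrt pi_pos.le

theorem sqrt_le_exp (x : ℝ) : √x ≤ exp x := by
  rcases le_or_gt 0 x with hx | hx
  · nlinarith [sq_nonneg (√x - 1 / 2), sq_sqrt hx, add_one_le_exp x]
  · rw [sqrt_eq_zero_of_nonpos hx.le]
    exact (exp_pos x).le

theorem stmt_11 (x : ℝ) (hx : 0 < x) :
    I0 x < Real.exp x / Real.sqrt (π * x) + 1 ∧ I0 x < Real.exp x / Real.sqrt x := by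
  set t := exp x / √(π * x) with ht
  have ht_pos : 0 < t := by positivity
  have ht_mul : t * √π = exp x / √x := by
    rw [ht, sqrt_mul pi_pos.le]
    field_simp
  have h3π : √3 < √π := sqrt_lt_sqrt (by norm_num) pi_gt_three
  have h32 : √3 < 2 := by
    rw [sqrt_lt' two_pos]
    norm_num
  have hone : 1 ≤ exp x / √x := (one_le_div (sqrt_pos.2 hx)).2 (sqrt_le_exp x)
  constructor
  · calc I0 x ≤ √3 / 2 * t + 1 / 2 := I0_le hx
      _ < t + 1 := by nlinarith
  · calc I0 x ≤ √3 / 2 * t + 1 / 2 := I0_le hx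
      _ < exp x / √x / 2 + 1 / 2 := by nlinarith
      _ ≤ exp x / √x := by linarith
end

section
/- For a ∈ (0,1), x > 0, and â = (1/√(1−a) − 1)/(2√a), the inequality 1/√(1 − u²/(4x)) ≤ â·u/√x + 1 holds for every u with 0 ≤ u ≤ 2√(ax). -/
open Real

/- The bound is the chord inequality for the convex function `f t = 1 / √(1 - t²)` on `[0, s]`,
with `s = √a` and `t = u / (2√x)`: the constant `â` is half the slope `(f s - f 0) / s`.
After squaring, the chord inequality becomes `1 ≤ (1 - t²) (1 + c t)²`, and the difference of the
two sides is `t (s - t) Q(t)` for a quadratic `Q` with nonnegative coefficients. -/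

theorem one_le_one_sub_sq_mul_one_add_mul_sq {s c t : ℝ} (hc : 0 ≤ c) (ht0 : 0 ≤ t)
    (hts : t ≤ s) (hchord : (1 + c * s) ^ 2 * (1 - s ^ 2) = 1) :
    1 ≤ (1 - t ^ 2) * (1 + c * t) ^ 2 := by
  obtain rfl | ht := ht0.eq_or_lt
  · simp
  have hs : 0 < s := ht.trans_le hts
  have hs1 : 0 < 1 - s := by
    have := pos_of_mul_pos_right (hchord ▸ one_pos) (sq_nonneg (1 + c * s))
    nlinarith
  have hprod : (1 + c * s) * (1 - s) ≤ 1 := by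
    refine le_of_sq_le_sq ?_ zero_le_one
    calc ((1 + c * s) * (1 - s)) ^ 2 = (1 + c * s) ^ 2 * ((1 - s) * (1 - s)) := by ring
      _ ≤ (1 + c * s) ^ 2 * ((1 - s) * (1 + s)) := by gcongr; linarith
      _ = 1 ^ 2 := by linear_combination hchord
  have hconst : 0 ≤ (1 + c * s) ^ 2 - c ^ 2 := by
    have : c ≤ 1 + c * s := by nlinarith
    nlinarith
  set Q := c ^ 2 * t ^ 2 + (2 * c + c ^ 2 * s) * t + ((1 + c * s) ^ 2 - c ^ 2)
  have hQ : 0 ≤ Q := add_nonneg (by positivity) hconst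
  have hfactor : s * ((1 - t ^ 2) * (1 + c * t) ^ 2) = s * (1 + t * (s - t) * Q) := by
    linear_combination t * hchord
  rw [mul_left_cancel₀ hs.ne' hfactor]
  have := mul_nonneg (mul_nonneg ht0 (sub_nonneg.2 hts)) hQ
  linarith

theorem one_div_sqrt_one_sub_sq_le_chord {s t : ℝ} (ht0 : 0 ≤ t) (hts : t ≤ s) (hs1 : s < 1) :
    1 / √(1 - t ^ 2) ≤ 1 + (1 / √(1 - s ^ 2) - 1) / s * t := by
  set c := (1 / √(1 - s ^ 2) - 1) / s
  have hk : 0 < √(1 - s ^ 2) := sqrt_pos.2 (by nlinarith)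
  have hk1 : √(1 - s ^ 2) ≤ 1 := sqrt_le_one.2 (by nlinarith)
  have hc : 0 ≤ c := div_nonneg (by rw [le_sub_iff_add_le, zero_add, le_div_iff₀ hk]; linarith)
    (ht0.trans hts)
  -- also at `s = 0`, where `c = 0` by the convention `x / 0 = 0`
  have hslope : 1 + c * s = 1 / √(1 - s ^ 2) := by
    rw [div_mul_cancel_of_imp fun hs ↦ by simp [hs]]
    ring
  have hchord : (1 + c * s) ^ 2 * (1 - s ^ 2) = 1 := by
    rw [hslope, div_pow, sq_sqrt (by nlinarith)]
    field_simp [(by nlinarith : (1 - s ^ 2) ≠ 0)]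
  have ht1 : 0 < 1 - t ^ 2 := by nlinarith
  rw [div_le_iff₀ (sqrt_pos.2 ht1), ← sqrt_sq (by positivity : 0 ≤ 1 + c * t), ← sqrt_mul' _ ht1.le,
    mul_comm]
  exact one_le_sqrt.2 (one_le_one_sub_sq_mul_one_add_mul_sq hc ht0 hts hchord)

theorem stmt_12 (a x : ℝ) (ha : 0 < a) (ha1 : a < 1) (hx : 0 < x) :
    ∀ u : ℝ, 0 ≤ u → u ≤ 2 * Real.sqrt (a * x) →
      1 / Real.sqrt (1 - u ^ 2 / (4 * x))
        ≤ ((1 / Real.sqrt (1 - a) - 1) / (2 * Real.sqrt a)) * u / Real.sqrt x + 1 := by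
  intro u hu0 hu
  have hw : 0 < √x := sqrt_pos.2 hx
  have hsa : √a ^ 2 = a := sq_sqrt ha.le
  have hts : u / (2 * √x) ≤ √a := by
    rw [div_le_iff₀ (by positivity)]
    rw [sqrt_mul ha.le] at hu
    linarith
  have hs1 : √a < 1 := (sqrt_lt' one_pos).2 (by linarith)
  have hbound := one_div_sqrt_one_sub_sq_le_chord (by positivity) hts hs1
  rw [hsa, div_pow, mul_pow, sq_sqrt hx.le] at hbound
  calc 1 / √(1 - u ^ 2 / (4 * x)) = 1 / √(1 - u ^ 2 / (2 ^ 2 * x)) := by norm_num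
    _ ≤ 1 + (1 / √(1 - a) - 1) / √a * (u / (2 * √x)) := hbound
    _ = (1 / √(1 - a) - 1) / (2 * √a) * u / √x + 1 := by ring
end

section
/- For all r > 0 and R > 0, the kernel satisfies K(R,r) < √(R/r)·e^{-(R−r)²/2}, i.e., R·e^{-(R²+r²)/2}·I₀(rR) < √(R/r)·e^{-(R−r)²/2}. -/
open MeasureTheory Real Set

/-!
On `[0, π]` the bound `cos θ ≤ 1 - 2θ²/π²` dominates the integrand of `I₀(x)` by `eˣ` times a
Gaussian, and the half-line Gaussian integral gives `I₀(x) < eˣ √(π / (8x)) < eˣ / √x`.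
Multiplying by `R e^{-(R²+r²)/2}` with `x = rR` turns `e^{-(R²+r²)/2} e^{rR}` into `e^{-(R-r)²/2}`.
-/

theorem intervalIntegral_exp_neg_mul_sq_lt {c : ℝ} (hc : 0 < c) (a : ℝ) :
    ∫ θ in (0:ℝ)..a, exp (-c * θ ^ 2) < √(π / c) / 2 := by
  have hint : Integrable (fun θ : ℝ => exp (-c * θ ^ 2)) := integrable_exp_neg_mul_sq hc
  have : NeZero (volume.restrict (Ioi a)) := ⟨by simp [Measure.restrict_eq_zero]⟩
  have htail : 0 < ∫ θ in Ioi a, exp (-c * θ ^ 2) := integral_exp_pos hint.integrableOn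
  rw [← integral_gaussian_Ioi c, ← intervalIntegral.integral_interval_add_Ioi hint.integrableOn
    hint.integrableOn]
  linarith

theorem exp_mul_cos_le {x θ : ℝ} (hx : 0 ≤ x) (hθ : |θ| ≤ π) :
    exp (x * cos θ) ≤ exp x * exp (-(2 * x / π ^ 2) * θ ^ 2) := by
  rw [← exp_add, exp_le_exp]
  calc x * cos θ ≤ x * (1 - 2 / π ^ 2 * θ ^ 2) :=
        mul_le_mul_of_nonneg_left (cos_le_one_sub_mul_cos_sq hθ) hx
    _ = x + -(2 * x / π ^ 2) * θ ^ 2 := by ring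

theorem I0_lt_exp_div_sqrt {x : ℝ} (hx : 0 < x) : I0 x < exp x / √x := by
  set c := 2 * x / π ^ 2
  have hc : 0 < c := by positivity
  have hbound : ∫ θ in (0:ℝ)..π, exp (x * cos θ) ≤ exp x * ∫ θ in (0:ℝ)..π, exp (-c * θ ^ 2) := by
    rw [← intervalIntegral.integral_const_mul]
    refine intervalIntegral.integral_mono_on pi_pos.le
      ((by fun_prop : Continuous _).intervalIntegrable _ _)
      ((by fun_prop : Continuous _).intervalIntegrable _ _) fun θ hθ => ?_
    exact exp_mul_cos_le hx.le (abs_le.2 ⟨by linarith [hθ.1, pi_pos], hθ.2⟩)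
  have hconst : √(π / c) ≤ 2 * π / √x := by
    rw [sqrt_le_iff, div_pow, sq_sqrt hx.le, div_le_div_iff₀ hc hx]
    refine ⟨by positivity, ?_⟩
    rw [show (2 * π) ^ 2 * c = 8 * x by simp only [c]; field_simp; ring]
    nlinarith [pi_le_four]
  calc I0 x ≤ π⁻¹ * (exp x * ∫ θ in (0:ℝ)..π, exp (-c * θ ^ 2)) := by
        rw [I0, one_div]; gcongr
    _ < π⁻¹ * (exp x * (√(π / c) / 2)) := by
        gcongr; exact intervalIntegral_exp_neg_mul_sq_lt hc π
    _ ≤ π⁻¹ * (exp x * (2 * π / √x / 2)) := by gcongr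
    _ = exp x / √x := by field_simp

theorem stmt_14 (R r : ℝ) (hR : 0 < R) (hr : 0 < r) :
    Ker R r < Real.sqrt (R / r) * Real.exp (-(R - r) ^ 2 / 2) := by
  have hexp : exp (-(R ^ 2 + r ^ 2) / 2) * exp (r * R) = exp (-(R - r) ^ 2 / 2) := by
    rw [← exp_add]; ring_nf
  have hsqrt : R / √(r * R) = √(R / r) := by
    rw [sqrt_mul hr.le, sqrt_div hR.le, div_eq_div_iff (by positivity) (by positivity),
      mul_left_comm, mul_self_sqrt hR.le, mul_comm]
  calc Ker R r < R * exp (-(R ^ 2 + r ^ 2) / 2) * (exp (r * R) / √(r * R)) := by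
        unfold Ker; gcongr; exact I0_lt_exp_div_sqrt (by positivity)
    _ = R / √(r * R) * (exp (-(R ^ 2 + r ^ 2) / 2) * exp (r * R)) := by ring
    _ = √(R / r) * exp (-(R - r) ^ 2 / 2) := by rw [hexp, hsqrt]
end

section
/- For every s ≥ 0 and every R ≥ 0, ∫₀^∞ r·e^{-s·r²}·K(R,r) dr = (R/(1+2s))·e^{-s·R²/(1+2s)}. -/
open MeasureTheory Real Set

/-!
Since `2π I₀(x) = ∫_{-π}^{π} e^{x cos θ} dθ`, the integral `∫₀^∞ r e^{-a r²} 2π I₀(b r) dr` is the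
integral of `e^{-a (x² + y²) + b x}` over the plane written in polar coordinates; this Gaussian
integral factors and equals `(π / a) e^{b² / 4a}`. The theorem is the case `a = s + 1/2`, `b = R`,
once the factor `e^{-r²/2}` of the kernel is absorbed into the Gaussian.
-/

lemma integrable_exp_neg_mul_sq_add_mul {a : ℝ} (ha : 0 < a) (b : ℝ) :
    Integrable fun x : ℝ => exp (-a * x ^ 2 + b * x) := by
  refine (integrable_cexp_quadratic (b := (a : ℂ)) (by simpa using ha) b 0).norm.congr
    (.of_forall fun x => ?_)
  simp only [← Complex.norm_exp_ofReal]
  push_cast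
  ring_nf

lemma integral_exp_neg_mul_sq_add_mul {a : ℝ} (ha : 0 < a) (b : ℝ) :
    ∫ x : ℝ, exp (-a * x ^ 2 + b * x) = √(π / a) * exp (b ^ 2 / (4 * a)) := by
  have complete_square : ∀ x : ℝ,
      -a * x ^ 2 + b * x = -a * (x + -(b / (2 * a))) ^ 2 + b ^ 2 / (4 * a) := by
    intro x; field_simp; ring
  simp_rw [complete_square, exp_add, integral_mul_const]
  rw [integral_add_right_eq_self (fun x : ℝ => exp (-a * x ^ 2)), integral_gaussian]

lemma integral_exp_neg_mul_sq_add_mul_mul_exp_neg_mul_sq {a : ℝ} (ha : 0 < a) (b : ℝ) :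
    ∫ p : ℝ × ℝ, exp (-a * p.1 ^ 2 + b * p.1) * exp (-a * p.2 ^ 2)
      = π / a * exp (b ^ 2 / (4 * a)) := by
  rw [Measure.volume_eq_prod, integral_prod_mul (fun x : ℝ => exp (-a * x ^ 2 + b * x))
    (fun y : ℝ => exp (-a * y ^ 2)), integral_exp_neg_mul_sq_add_mul ha, integral_gaussian,
    mul_right_comm, mul_self_sqrt (by positivity)]

lemma integral_Ioo_exp_mul_cos (x : ℝ) :
    ∫ θ in Ioo (-π) π, exp (x * cos θ) = 2 * π * I0 x := by
  have hint : ∀ y z : ℝ, IntervalIntegrable (fun θ => exp (x * cos θ)) volume y z :=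
    fun y z => (by fun_prop : Continuous fun θ => exp (x * cos θ)).intervalIntegrable y z
  have hsymm : ∫ θ in (-π)..0, exp (x * cos θ) = ∫ θ in 0..π, exp (x * cos θ) := by
    simpa using (intervalIntegral.integral_comp_neg (a := 0) (b := π)
      fun θ => exp (x * cos θ)).symm
  rw [← integral_Ioc_eq_integral_Ioo, ← intervalIntegral.integral_of_le (by linarith [pi_pos]),
    ← intervalIntegral.integral_add_adjacent_intervals (hint _ 0) (hint 0 _), hsymm, I0]
  field_simp
  ring

lemma integrableOn_mul_exp_neg_mul_sq_add_mul_mul_cos {a : ℝ} (ha : 0 < a) (b : ℝ) :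
    IntegrableOn (fun p : ℝ × ℝ => p.1 * exp (-a * p.1 ^ 2 + b * (p.1 * cos p.2)))
      (Ioi 0 ×ˢ Ioo (-π) π) := by
  have hdom : Integrable (fun p : ℝ × ℝ => exp (-a * p.1 ^ 2 + (|b| + 1) * p.1) * (1 : ℝ))
      ((volume.restrict (Ioi 0)).prod (volume.restrict (Ioo (-π) π))) :=
    (integrable_exp_neg_mul_sq_add_mul ha _).restrict.mul_prod
      (integrableOn_const measure_Ioo_lt_top.ne)
  rw [Measure.prod_restrict] at hdom
  refine hdom.mono' (Continuous.aestronglyMeasurable (by fun_prop)) ?_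
  filter_upwards [ae_restrict_mem (measurableSet_Ioi.prod measurableSet_Ioo)] with p hp
  have hr : 0 < p.1 := hp.1
  have hcos : b * (p.1 * cos p.2) ≤ |b| * p.1 :=
    calc b * (p.1 * cos p.2) ≤ |b * (p.1 * cos p.2)| := le_abs_self _
      _ = |b| * (p.1 * |cos p.2|) := by rw [abs_mul, abs_mul, abs_of_pos hr]
      _ ≤ |b| * p.1 := by gcongr; exact mul_le_of_le_one_right hr.le (abs_cos_le_one _)
  rw [norm_of_nonneg (by positivity), mul_one]
  calc p.1 * exp (-a * p.1 ^ 2 + b * (p.1 * cos p.2))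
      ≤ exp p.1 * exp (-a * p.1 ^ 2 + |b| * p.1) := by
        gcongr
        linarith [add_one_le_exp p.1]
    _ = exp (-a * p.1 ^ 2 + (|b| + 1) * p.1) := by rw [← exp_add]; ring_nf

theorem integral_mul_exp_neg_mul_sq_mul_I0 {a : ℝ} (ha : 0 < a) (b : ℝ) :
    ∫ r in Ioi (0 : ℝ), r * exp (-a * r ^ 2) * I0 (r * b) = exp (b ^ 2 / (4 * a)) / (2 * a) := by
  set F : ℝ × ℝ → ℝ := fun p => p.1 * exp (-a * p.1 ^ 2 + b * (p.1 * cos p.2))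
  set G : ℝ × ℝ → ℝ := fun p => exp (-a * p.1 ^ 2 + b * p.1) * exp (-a * p.2 ^ 2)
  have angular (r : ℝ) :
      ∫ θ in Ioo (-π) π, F (r, θ) = 2 * π * (r * exp (-a * r ^ 2) * I0 (r * b)) := by
    have hF : ∀ θ, F (r, θ) = r * exp (-a * r ^ 2) * exp (r * b * cos θ) := fun θ => by
      simp only [F, mul_assoc, ← exp_add]; ring_nf
    simp_rw [hF, integral_const_mul, integral_Ioo_exp_mul_cos]
    ring
  have polar (p : ℝ × ℝ) : F p = p.1 • G (polarCoord.symm p) := by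
    simp only [F, G, polarCoord_symm_apply, smul_eq_mul, ← exp_add]
    congr 2
    linear_combination a * p.1 ^ 2 * sin_sq_add_cos_sq p.2
  have h : 2 * π * ∫ r in Ioi (0 : ℝ), r * exp (-a * r ^ 2) * I0 (r * b)
      = π / a * exp (b ^ 2 / (4 * a)) :=
    calc _ = ∫ r in Ioi (0 : ℝ), ∫ θ in Ioo (-π) π, F (r, θ) := by
          simp_rw [angular, integral_const_mul]
      _ = ∫ p in Ioi 0 ×ˢ Ioo (-π) π, F p :=
          (setIntegral_prod F (integrableOn_mul_exp_neg_mul_sq_add_mul_mul_cos ha b)).symm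
      _ = ∫ p in polarCoord.target, p.1 • G (polarCoord.symm p) := by
          simp_rw [polarCoord_target, polar]
      _ = ∫ p, G p := integral_comp_polarCoord_symm G
      _ = π / a * exp (b ^ 2 / (4 * a)) :=
          integral_exp_neg_mul_sq_add_mul_mul_exp_neg_mul_sq ha b
  rw [div_mul_eq_mul_div, eq_div_iff ha.ne'] at h
  rw [eq_div_iff (by positivity)]
  exact mul_left_cancel₀ pi_ne_zero (by linear_combination h)

theorem stmt_15_general (s R : ℝ) (hs : 0 ≤ s) :
    (∫ r in Ioi (0:ℝ), r * Real.exp (-s * r ^ 2) * Ker R r)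
      = (R / (1 + 2 * s)) * Real.exp (-s * R ^ 2 / (1 + 2 * s)) := by
  have hs' : (0 : ℝ) < s + 1 / 2 := by linarith
  have hKer (r : ℝ) : r * exp (-s * r ^ 2) * Ker R r
      = R * exp (-R ^ 2 / 2) * (r * exp (-(s + 1 / 2) * r ^ 2) * I0 (r * R)) := by
    have hexp : exp (-s * r ^ 2) * exp (-(R ^ 2 + r ^ 2) / 2)
        = exp (-R ^ 2 / 2) * exp (-(s + 1 / 2) * r ^ 2) := by
      rw [← exp_add, ← exp_add]; ring_nf
    rw [Ker]
    linear_combination r * R * I0 (r * R) * hexp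
  have hexponent : exp (-R ^ 2 / 2) * exp (R ^ 2 / (4 * (s + 1 / 2)))
      = exp (-s * R ^ 2 / (1 + 2 * s)) := by
    have h2s : 1 + 2 * s ≠ 0 := by linarith
    rw [← exp_add]
    congr 1
    field_simp
    ring
  simp_rw [hKer, integral_const_mul, integral_mul_exp_neg_mul_sq_mul_I0 hs', ← hexponent]
  field_simp
  ring

theorem stmt_15 (s R : ℝ) (hs : 0 ≤ s) (hR : 0 ≤ R) :
    (∫ r in Ioi (0:ℝ), r * Real.exp (-s * r ^ 2) * Ker R r)
      = (R / (1 + 2 * s)) * Real.exp (-s * R ^ 2 / (1 + 2 * s)) :=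
  stmt_15_general s R hs
end

section
/- Let n be a complex random variable with density w ↦ (1/(2π))·e^{-|w|²/2} with respect to Lebesgue measure on ℂ (a circularly symmetric complex Gaussian with E|n|² = 2), let x be any complex random variable independent of n, and let y = x + n. Then y has a density f_y on ℂ, and for every A > 1/2 there do NOT exist constants C > 0 and M > 0 such that f_y(y) ≤ C·e^{-A|y|²} for all y with |y| ≥ M; that is, f_y(y) is not O(e^{-A|y|²}) as |y| → ∞ for any A > 1/2. -/
/-!
The law of `x + n` is the convolution of the law of `x` with an absolutely continuous measure,
hence has a density. For the tail, pick `r` with `P(‖x‖ ≤ r) > 1/2`. Independence and the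
triangle inequality give `P(‖x + n‖ ≥ R) ≥ P(‖x‖ ≤ r) P(‖n‖ ≥ R + r)`, and integrating the
Gaussian density over a unit disc inside `{‖w‖ ≥ R + r}` bounds this below by a multiple of
`exp (-(R + r + 2)² / 2)`. A density bounded by `C exp (-A ‖y‖²)` would instead make it
`O(exp (-a R²))` for any `a ∈ (1/2, A)`, which is smaller for large `R`.
-/

open MeasureTheory Real ProbabilityTheory Filter

theorem MeasureTheory.Measure.exists_ofReal_density_of_absolutelyContinuous {α : Type*}
    [MeasurableSpace α] {μ ν : Measure α} [IsFiniteMeasure ν] [ν.HaveLebesgueDecomposition μ]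
    (h : ν ≪ μ) : ∃ f : α → ℝ, ν = μ.withDensity fun a => ENNReal.ofReal (f a) := by
  refine ⟨fun a => (ν.rnDeriv μ a).toReal, ?_⟩
  rw [withDensity_congr_ae (g := ν.rnDeriv μ)]
  · exact (Measure.absolutelyContinuous_iff_withDensity_rnDeriv_eq.mp h).symm
  · filter_upwards [Measure.rnDeriv_lt_top ν μ] with a ha using ENNReal.ofReal_toReal ha.ne

theorem MeasureTheory.exists_lt_measure_setOf_le_of_lt_measure_univ {Ω : Type*} [MeasurableSpace Ω]
    {P : Measure Ω} (g : Ω → ℝ) {c : ENNReal} (hc : c < P Set.univ) :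
    ∃ r : ℝ, c < P {ω | g ω ≤ r} := by
  have hmono : Monotone fun r : ℝ => {ω | g ω ≤ r} := fun r s hrs ω hω => le_trans hω hrs
  have hunion : ⋃ r : ℝ, {ω | g ω ≤ r} = Set.univ :=
    Set.eq_univ_of_forall fun ω => Set.mem_iUnion.mpr ⟨g ω, le_refl (g ω)⟩
  have ht := tendsto_measure_iUnion_atTop (μ := P) hmono
  rw [hunion] at ht
  exact ((tendsto_order.1 ht).1 c hc).exists

theorem ProbabilityTheory.IndepFun.measure_norm_le_mul_measure_le_norm_le_measure_le_norm_add
    {Ω E : Type*} [MeasurableSpace Ω] {P : Measure Ω} [NormedAddCommGroup E]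
    [MeasurableSpace E] [OpensMeasurableSpace E] {X Y : Ω → E} (hXY : IndepFun X Y P)
    (r s : ℝ) :
    P {ω | ‖X ω‖ ≤ r} * P {ω | s + r ≤ ‖Y ω‖} ≤ P {ω | s ≤ ‖X ω + Y ω‖} := by
  have hsub : X ⁻¹' {v | ‖v‖ ≤ r} ∩ Y ⁻¹' {v | s + r ≤ ‖v‖} ⊆ {ω | s ≤ ‖X ω + Y ω‖} := by
    rintro ω ⟨hX, hY⟩
    have htri : ‖Y ω‖ ≤ ‖X ω + Y ω‖ + ‖X ω‖ := by
      simpa using norm_sub_le (X ω + Y ω) (X ω)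
    simp only [Set.mem_preimage, Set.mem_ofPred_eq] at hX hY ⊢
    linarith
  calc P {ω | ‖X ω‖ ≤ r} * P {ω | s + r ≤ ‖Y ω‖}
      = P (X ⁻¹' {v | ‖v‖ ≤ r} ∩ Y ⁻¹' {v | s + r ≤ ‖v‖}) :=
        (hXY.measure_inter_preimage_eq_mul _ _ (measurableSet_le measurable_norm measurable_const)
          (measurableSet_le measurable_const measurable_norm)).symm
    _ ≤ P {ω | s ≤ ‖X ω + Y ω‖} := measure_mono hsub

theorem MeasureTheory.setLIntegral_le_ofReal_of_le_exp_neg_mul_sq_norm {E : Type*}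
    [SeminormedAddCommGroup E] [MeasurableSpace E] [OpensMeasurableSpace E] {μ : Measure E}
    {f : E → ℝ} {a δ C R : ℝ}
    (ha : 0 ≤ a) (hC : 0 ≤ C) (hR : 0 ≤ R)
    (hint : Integrable (fun y => exp (-δ * ‖y‖ ^ 2)) μ)
    (hf : ∀ y, R ≤ ‖y‖ → f y ≤ C * exp (-(a + δ) * ‖y‖ ^ 2)) :
    ∫⁻ y in {y | R ≤ ‖y‖}, ENNReal.ofReal (f y) ∂μ
      ≤ ENNReal.ofReal (C * exp (-a * R ^ 2) * ∫ y, exp (-δ * ‖y‖ ^ 2) ∂μ) := by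
  set g : E → ℝ := fun y => C * exp (-a * R ^ 2) * exp (-δ * ‖y‖ ^ 2)
  have hfg : ∀ y ∈ {y : E | R ≤ ‖y‖}, ENNReal.ofReal (f y) ≤ ENNReal.ofReal (g y) := by
    intro y hy
    refine ENNReal.ofReal_le_ofReal ((hf y hy).trans ?_)
    simp only [g, mul_assoc, ← exp_add]
    gcongr
    have : R ^ 2 ≤ ‖y‖ ^ 2 := pow_le_pow_left₀ hR hy 2
    nlinarith
  calc ∫⁻ y in {y | R ≤ ‖y‖}, ENNReal.ofReal (f y) ∂μ
      ≤ ∫⁻ y in {y | R ≤ ‖y‖}, ENNReal.ofReal (g y) ∂μ :=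
        setLIntegral_mono' (measurableSet_le measurable_const continuous_norm.measurable) hfg
    _ ≤ ∫⁻ y, ENNReal.ofReal (g y) ∂μ := setLIntegral_le_lintegral _ _
    _ = ENNReal.ofReal (∫ y, g y ∂μ) :=
        (ofReal_integral_eq_lintegral_ofReal (hint.const_mul _)
          (.of_forall fun y => by positivity)).symm
    _ = _ := by rw [integral_const_mul]

theorem integrable_exp_neg_mul_sq_norm_complex {δ : ℝ} (hδ : 0 < δ) :
    Integrable fun y : ℂ => exp (-δ * ‖y‖ ^ 2) := by
  apply Integrable.of_integral_ne_zero
  rw [GaussianFourier.integral_rexp_neg_mul_sq_norm hδ]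
  positivity

theorem ofReal_exp_div_two_le_complexGaussian_setOf_le_norm {s : ℝ} (hs : 0 ≤ s) :
    ENNReal.ofReal (exp (-(s + 2) ^ 2 / 2) / 2)
      ≤ volume.withDensity (fun w : ℂ => ENNReal.ofReal ((1 / (2 * π)) * exp (-(‖w‖) ^ 2 / 2)))
          {w | s ≤ ‖w‖} := by
  set B := Metric.closedBall ((s + 1 : ℝ) : ℂ) 1
  have hnorm : ∀ w ∈ B, s ≤ ‖w‖ ∧ ‖w‖ ≤ s + 2 := by
    intro w hw
    rw [Metric.mem_closedBall, dist_eq_norm] at hw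
    have h1 := norm_sub_norm_le w ((s + 1 : ℝ) : ℂ)
    have h2 := norm_sub_norm_le ((s + 1 : ℝ) : ℂ) w
    rw [norm_sub_rev] at h2
    rw [Complex.norm_real, Real.norm_of_nonneg (by linarith)] at h1 h2
    constructor <;> linarith
  have hdens : ∀ w ∈ B, ENNReal.ofReal ((1 / (2 * π)) * exp (-(s + 2) ^ 2 / 2))
      ≤ ENNReal.ofReal ((1 / (2 * π)) * exp (-(‖w‖) ^ 2 / 2)) := by
    intro w hw
    obtain ⟨h1, h2⟩ := hnorm w hw
    gcongr
  calc ENNReal.ofReal (exp (-(s + 2) ^ 2 / 2) / 2)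
      = ∫⁻ _ in B, ENNReal.ofReal ((1 / (2 * π)) * exp (-(s + 2) ^ 2 / 2)) := by
        rw [setLIntegral_const, Complex.volume_closedBall, ENNReal.ofReal_one, one_pow, one_mul,
          ← ENNReal.ofReal_coe_nnreal, NNReal.coe_real_pi, ← ENNReal.ofReal_mul (by positivity)]
        congr 1
        field_simp
    _ ≤ ∫⁻ w in B, ENNReal.ofReal ((1 / (2 * π)) * exp (-(‖w‖) ^ 2 / 2)) :=
        setLIntegral_mono (by fun_prop) hdens
    _ = _ := (withDensity_apply _ measurableSet_closedBall).symm
    _ ≤ _ := measure_mono fun w hw => (hnorm w hw).1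

theorem not_eventually_exp_neg_sq_le {a : ℝ} (ha : 1 / 2 < a) (c K : ℝ) :
    ¬ ∀ᶠ R in atTop, exp (-(R + c) ^ 2 / 2) ≤ K * exp (-a * R ^ 2) := by
  have hq : Tendsto (fun R => a * R ^ 2 - (R + c) ^ 2 / 2) atTop atTop := by
    have hlin : Tendsto (fun R => (a - 1 / 2) * R - c) atTop atTop :=
      tendsto_atTop_add_const_right _ _ (tendsto_id.const_mul_atTop (by linarith))
    refine tendsto_atTop_add_const_right _ (-(c ^ 2 / 2)) (tendsto_id.atTop_mul_atTop₀ hlin)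
      |>.congr fun R => ?_
    simp only [id]
    ring
  intro h
  obtain ⟨R, hKlt, hle⟩ := ((tendsto_exp_atTop.comp hq).eventually_gt_atTop K).and h |>.exists
  have hsplit : exp (-(R + c) ^ 2 / 2) = exp (a * R ^ 2 - (R + c) ^ 2 / 2) * exp (-a * R ^ 2) := by
    rw [← exp_add]; ring_nf
  rw [hsplit] at hle
  exact (mul_lt_mul_of_pos_right hKlt (exp_pos _)).not_ge hle

theorem stmt_18 {Ω : Type*} [MeasurableSpace Ω] (P : Measure Ω) [IsProbabilityMeasure P]
    (x n : Ω → ℂ) (hx : Measurable x) (hn : Measurable n)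
    (hindep : IndepFun x n P)
    (hdens : Measure.map n P = volume.withDensity
      (fun w => ENNReal.ofReal ((1 / (2 * π)) * Real.exp (-(‖w‖) ^ 2 / 2)))) :
    (∃ f : ℂ → ℝ, Measure.map (fun ω => x ω + n ω) P
        = volume.withDensity (fun y => ENNReal.ofReal (f y))) ∧
    (∀ f : ℂ → ℝ, Measure.map (fun ω => x ω + n ω) P
        = volume.withDensity (fun y => ENNReal.ofReal (f y)) →
      ∀ A : ℝ, 1 / 2 < A →
        ¬ ∃ C : ℝ, 0 < C ∧ ∃ M : ℝ, 0 < M ∧ ∀ y : ℂ, M ≤ ‖y‖ →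
            f y ≤ C * Real.exp (-A * (‖y‖) ^ 2)) := by
  have hlaw : P.map (x + n) = P.map x ∗ P.map n := hindep.map_add_eq_map_conv_map hx hn
  refine ⟨Measure.exists_ofReal_density_of_absolutelyContinuous <| hlaw ▸
    Measure.conv_absolutelyContinuous (hdens ▸ withDensity_absolutelyContinuous _ _), ?_⟩
  rintro f hf A hA ⟨C, hC, M, hM, hbound⟩
  obtain ⟨r, hr⟩ := exists_lt_measure_setOf_le_of_lt_measure_univ (P := P) (fun ω => ‖x ω‖)
    (c := ENNReal.ofReal (1 / 2)) (by simp)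
  obtain ⟨a, ha, haA⟩ := exists_between hA
  set K := ∫ y : ℂ, exp (-(A - a) * ‖y‖ ^ 2)
  refine not_eventually_exp_neg_sq_le ha (r + 2) (4 * C * K) ?_
  filter_upwards [eventually_ge_atTop M, eventually_ge_atTop (-r)] with R hRM hRr
  have hmeas : ∀ t : ℝ, MeasurableSet {w : ℂ | t ≤ ‖w‖} := fun t =>
    measurableSet_le measurable_const continuous_norm.measurable
  have hlower : ENNReal.ofReal (1 / 2) * ENNReal.ofReal (exp (-(R + r + 2) ^ 2 / 2) / 2)
      ≤ P {ω | R ≤ ‖x ω + n ω‖} := by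
    refine le_trans ?_ (hindep.measure_norm_le_mul_measure_le_norm_le_measure_le_norm_add r R)
    gcongr
    rw [← Set.preimage_ofPred_eq (p := fun w : ℂ => R + r ≤ ‖w‖), ← Measure.map_apply hn (hmeas _),
      hdens]
    exact ofReal_exp_div_two_le_complexGaussian_setOf_le_norm (by linarith)
  have hupper : P {ω | R ≤ ‖x ω + n ω‖} ≤ ENNReal.ofReal (C * exp (-a * R ^ 2) * K) := by
    rw [← Set.preimage_ofPred_eq (p := fun w : ℂ => R ≤ ‖w‖),
      ← Measure.map_apply (f := fun ω => x ω + n ω) (hx.add hn) (hmeas _), hf,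
      withDensity_apply _ (hmeas _)]
    refine setLIntegral_le_ofReal_of_le_exp_neg_mul_sq_norm (by linarith) hC.le (by linarith)
      (integrable_exp_neg_mul_sq_norm_complex (by linarith)) fun y hy => ?_
    rw [add_sub_cancel]
    exact hbound y (hRM.trans hy)
  have := hlower.trans hupper
  rw [← ENNReal.ofReal_mul (by norm_num), ENNReal.ofReal_le_ofReal_iff (by positivity)] at this
  have hsq : (R + (r + 2)) ^ 2 = (R + r + 2) ^ 2 := by ring
  rw [hsq]
  linarith
end
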